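/- Let k ≥ 2 be an integer and let T = (V,E) be a finite tree with |V| ≥ k. Then there exists a connected generalized k-community structure of T. -/

import Mathlib

/-- The set of neighbours of `v` lying in `C`. -/
def nbrsIn {V : Type*} [DecidableEq V] (G : SimpleGraph V) [DecidableRel G.Adj]
    (C : Finset V) (v : V) : Finset V :=
  C.filter (fun w => G.Adj v w)

/-- A generalized `k`-community structure of `G`. -/
def IsGenKComm {V : Type*} [Fintype V] [DecidableEq V] (G : SimpleGraph V) [DecidableRel G.Adj]
    {k : ℕ} (C : Fin k → Finset V) : Prop :=
  (∀ i, (C i).Nonempty) ∧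
  (∀ i j, i ≠ j → Disjoint (C i) (C j)) ∧
  (∀ v : V, ∃ i, v ∈ C i) ∧
  (∀ i j, i ≠ j → ∀ v ∈ C i,
    (nbrsIn G (C j) v).card * ((C i).card - 1) ≤ (nbrsIn G (C i) v).card * (C j).card)


/-!
Among all partitions of the vertex set into `k` parts that each induce a connected subgraph
(they exist: a finite connected vertex set with at least two vertices has a vertex whose
removal leaves it connected), take one minimising `∑ |C_i|²`. In a forest a vertex `u` outside
a connected part `C_j` has at most one neighbour in it, so the community inequality can only
fail when `u ∈ C_i` has exactly one neighbour in `C_j` and `|C_i| - 1 > |N_{C_i}(u)| · |C_j|`.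
By pigeonhole some component `K` of `C_i - u` then has more than `|C_j|` vertices, and
replacing `C_i, C_j` by `(C_i \ K) ∪ C_j` (connected through `u` and its neighbour in `C_j`)
and `K` gives a connected partition with a smaller sum of squares.
-/

open Finset Function

namespace SimpleGraph

variable {V : Type*} {G : SimpleGraph V}

lemma Preconnected.exists_walk_of_induce {s : Set V} (hs : (G.induce s).Preconnected)
    {x y : V} (hx : x ∈ s) (hy : y ∈ s) : ∃ p : G.Walk x y, ∀ z ∈ p.support, z ∈ s := by
  obtain ⟨q⟩ := hs ⟨x, hx⟩ ⟨y, hy⟩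
  refine ⟨q.map (Embedding.induce s).toHom, fun z hz => ?_⟩
  obtain ⟨z', -, rfl⟩ := List.mem_map.1 (Walk.support_map _ q ▸ hz)
  exact z'.2

lemma connected_induce_of_forall_exists_walk {s : Set V} {r : V} (hr : r ∈ s)
    (h : ∀ z ∈ s, ∃ p : G.Walk r z, ∀ x ∈ p.support, x ∈ s) :
    (G.induce s).Connected := by
  refine induce_connected_of_patches r hr fun {z} hz => ?_
  obtain ⟨p, hp⟩ := h z hz
  exact ⟨_, hp, p.start_mem_support, p.end_mem_support,
    p.connected_induce_support.preconnected _ _⟩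

lemma Connected.induce_image_val {s : Set V} {t : Set s} (h : ((G.induce s).induce t).Connected) :
    (G.induce (Subtype.val '' t)).Connected :=
  h.map { toFun := fun x => ⟨x.1.1, x.1, x.2, rfl⟩, map_rel' := id } <| by
    rintro ⟨_, x, hx, rfl⟩
    exact ⟨⟨x, hx⟩, rfl⟩

lemma Connected.exists_connected_induce_diff_singleton {s : Set V}
    (hs : (G.induce s).Connected) (hfin : s.Finite) (hnt : s.Nontrivial) :
    ∃ x ∈ s, (G.induce (s \ {x})).Connected := by
  have := hfin.to_subtype
  have := hnt.coe_sort
  obtain ⟨x, hx⟩ := hs.exists_connected_induce_compl_singleton_of_finite_nontrivial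
  refine ⟨x, x.2, ?_⟩
  have h := hx.induce_image_val
  rwa [Set.image_val_compl, Set.image_singleton] at h

lemma IsAcyclic.subsingleton_neighborSet_inter (hG : G.IsAcyclic) {s : Set V}
    (hs : (G.induce s).Preconnected) {u : V} (hu : u ∉ s) :
    (G.neighborSet u ∩ s).Subsingleton := by
  classical
  rintro a ⟨hua : G.Adj u a, has⟩ b ⟨hub : G.Adj u b, hbs⟩
  by_contra hab
  obtain ⟨p, hp⟩ := hs.exists_walk_of_induce has hbs
  have hau : a ≠ u := fun h => hu (h ▸ has)
  have hbu : b ≠ u := fun h => hu (h ▸ hbs)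
  have hq : (Walk.cons hua.symm (Walk.cons hub .nil) : G.Walk a b).IsPath := by
    simp [Walk.isPath_def, hau, hab, hbu.symm]
  have hmem : u ∈ (p.toPath : G.Walk a b).support := by
    rw [(hG.subsingleton_path a b).elim p.toPath ⟨_, hq⟩]; simp
  exact hu (hp u (p.support_toPath_subset_support hmem))

lemma Walk.exists_walk_to_neighbor_of_ne {u z : V} (p : G.Walk z u) (hz : z ≠ u) :
    ∃ w, G.Adj w u ∧ ∃ q : G.Walk z w, ∀ x ∈ q.support, x ∈ p.support ∧ x ≠ u := by
  induction p with
  | nil => exact absurd rfl hz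
  | @cons z z' u h p ih =>
    by_cases hz' : z' = u
    · subst hz'
      exact ⟨z, h, .nil, by simp [hz]⟩
    · obtain ⟨w, hw, q, hq⟩ := ih hz'
      refine ⟨w, hw, .cons h q, fun x hx => ?_⟩
      rcases List.mem_cons.1 (Walk.support_cons h q ▸ hx) with rfl | hx
      · exact ⟨by simp, hz⟩
      · exact ⟨by simp [(hq x hx).1], (hq x hx).2⟩

section componentIn

open Classical in
noncomputable def componentIn (G : SimpleGraph V) (A : Finset V) (w : V) : Finset V :=
  {z ∈ A | ∃ p : G.Walk w z, ∀ x ∈ p.support, x ∈ A}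

variable {A : Finset V} {w x z : V}

lemma mem_componentIn :
    z ∈ G.componentIn A w ↔ ∃ p : G.Walk w z, ∀ x ∈ p.support, x ∈ A := by
  simp only [componentIn, mem_filter, and_iff_right_iff_imp]
  exact fun ⟨p, hp⟩ => hp z p.end_mem_support

lemma componentIn_subset : G.componentIn A w ⊆ A := by
  intro z hz
  obtain ⟨p, hp⟩ := mem_componentIn.1 hz
  exact hp z p.end_mem_support

lemma self_mem_componentIn (hw : w ∈ A) : w ∈ G.componentIn A w :=
  mem_componentIn.2 ⟨.nil, by simpa using hw⟩

lemma componentIn_trans (hx : x ∈ G.componentIn A w) (hz : z ∈ G.componentIn A x) :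
    z ∈ G.componentIn A w := by
  obtain ⟨p, hp⟩ := mem_componentIn.1 hx
  obtain ⟨q, hq⟩ := mem_componentIn.1 hz
  refine mem_componentIn.2 ⟨p.append q, fun y hy => ?_⟩
  rcases (Walk.mem_support_append_iff _ _).1 hy with hy | hy
  exacts [hp y hy, hq y hy]

lemma mem_componentIn_of_mem_support [DecidableEq V] {p : G.Walk w z}
    (hp : ∀ y ∈ p.support, y ∈ A) (hx : x ∈ p.support) :
    x ∈ G.componentIn A w ∧ z ∈ G.componentIn A x :=
  ⟨mem_componentIn.2 ⟨p.takeUntil x hx,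
      fun y hy => hp y (p.support_takeUntil_subset_support hx hy)⟩,
    mem_componentIn.2 ⟨p.dropUntil x hx,
      fun y hy => hp y (p.support_dropUntil_subset_support hx hy)⟩⟩

lemma connected_induce_componentIn (hw : w ∈ A) :
    (G.induce (G.componentIn A w : Set V)).Connected :=
  connected_induce_of_forall_exists_walk (self_mem_componentIn hw) fun z hz => by
    classical
    obtain ⟨p, hp⟩ := mem_componentIn.1 hz
    exact ⟨p, fun x hx => (mem_componentIn_of_mem_support hp hx).1⟩

end componentIn

section branches

variable [DecidableEq V] [DecidableRel G.Adj] {s : Finset V} {u : V}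

lemma subset_biUnion_componentIn_nbrsIn (hs : (G.induce (s : Set V)).Preconnected)
    (hu : u ∈ s) : s.erase u ⊆ (nbrsIn G s u).biUnion (G.componentIn (s.erase u)) := by
  intro z hz
  obtain ⟨p, hp⟩ := hs.exists_walk_of_induce (mem_of_mem_erase hz) hu
  obtain ⟨w, hwu, q, hq⟩ := p.exists_walk_to_neighbor_of_ne (ne_of_mem_erase hz)
  have hqA : ∀ x ∈ q.support, x ∈ s.erase u := fun x hx =>
    mem_erase.2 ⟨(hq x hx).2, hp x (hq x hx).1⟩
  refine mem_biUnion.2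
    ⟨w, ?_, mem_componentIn.2 ⟨q.reverse, fun x hx => hqA x (by simpa using hx)⟩⟩
  exact mem_filter.2 ⟨mem_of_mem_erase (hqA w q.end_mem_support), hwu.symm⟩

lemma connected_induce_sdiff_componentIn (hs : (G.induce (s : Set V)).Preconnected) (hu : u ∈ s)
    (w : V) : (G.induce (↑(s \ G.componentIn (s.erase u) w) : Set V)).Connected := by
  have huK : u ∉ G.componentIn (s.erase u) w := fun h =>
    notMem_erase u s (componentIn_subset h)
  refine connected_induce_of_forall_exists_walk (mem_sdiff.2 ⟨hu, huK⟩) fun z hz => ?_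
  obtain ⟨hzs, hzK⟩ := mem_sdiff.1 hz
  by_cases hzu : z = u
  · subst hzu
    exact ⟨.nil, by simpa using hz⟩
  obtain ⟨w', hw', hzw'⟩ := mem_biUnion.1
    (subset_biUnion_componentIn_nbrsIn hs hu (mem_erase.2 ⟨hzu, hzs⟩))
  obtain ⟨q, hq⟩ := mem_componentIn.1 hzw'
  refine ⟨.cons (mem_filter.1 hw').2 q, fun x hx => ?_⟩
  rcases List.mem_cons.1 (Walk.support_cons _ q ▸ hx) with rfl | hx
  · exact mem_sdiff.2 ⟨hu, huK⟩
  · obtain ⟨-, hzx⟩ := mem_componentIn_of_mem_support hq hx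
    exact mem_sdiff.2
      ⟨mem_of_mem_erase (hq x hx), fun hxK => hzK (componentIn_trans hxK hzx)⟩

lemma exists_lt_card_componentIn (hs : (G.induce (s : Set V)).Preconnected) (hu : u ∈ s) {b : ℕ}
    (h : (nbrsIn G s u).card * b < s.card - 1) :
    ∃ w ∈ nbrsIn G s u, b < (G.componentIn (s.erase u) w).card := by
  by_contra! hle
  have := (card_le_card (subset_biUnion_componentIn_nbrsIn hs hu)).trans
    (card_biUnion_le_card_mul _ _ _ hle)
  rw [card_erase_of_mem hu] at this
  omega

end branches

lemma IsAcyclic.card_nbrsIn_le_one [DecidableEq V] [DecidableRel G.Adj] (hG : G.IsAcyclic)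
    {s : Finset V} (hs : (G.induce (s : Set V)).Preconnected) {u : V} (hu : u ∉ s) :
    (nbrsIn G s u).card ≤ 1 :=
  card_le_one.2 fun _ ha _ hb =>
    hG.subsingleton_neighborSet_inter hs hu ⟨(mem_filter.1 ha).2, (mem_filter.1 ha).1⟩
      ⟨(mem_filter.1 hb).2, (mem_filter.1 hb).1⟩

lemma Connected.exists_connected_fin_partition [DecidableEq V] (k : ℕ) {s : Finset V}
    (hs : (G.induce (s : Set V)).Connected) (hk : k + 1 ≤ s.card) :
    ∃ C : Fin (k + 1) → Finset V,
      Pairwise (Disjoint on C) ∧ (∀ v, v ∈ s ↔ ∃ i, v ∈ C i) ∧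
      ∀ i, (G.induce (C i : Set V)).Connected := by
  induction k generalizing s with
  | zero =>
    exact ⟨fun _ => s, fun i j hij => absurd (Subsingleton.elim (α := Fin 1) i j) hij,
      fun v => ⟨fun h => ⟨0, h⟩, fun ⟨_, h⟩ => h⟩, fun _ => hs⟩
  | succ k ih =>
    obtain ⟨x, hx, hsx⟩ := hs.exists_connected_induce_diff_singleton s.finite_toSet
      (one_lt_card_iff_nontrivial.1 (by omega))
    rw [← coe_singleton, ← coe_sdiff, ← erase_eq] at hsx
    obtain ⟨C, hdisj, hcover, hconn⟩ := ih hsx (by rw [card_erase_of_mem hx]; omega)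
    refine ⟨Fin.cons {x} C, ?_, fun v => ?_, Fin.forall_fin_succ.2 ⟨?_, hconn⟩⟩
    · refine pairwise_fin_succ_iff_of_isSymm.2 ⟨fun j => ?_, hdisj⟩
      simp only [Function.onFun, Fin.cons_zero, Fin.cons_succ, disjoint_singleton_left]
      exact fun h => notMem_erase x s ((hcover x).2 ⟨j, h⟩)
    · simp only [Fin.exists_fin_succ, Fin.cons_zero, Fin.cons_succ, mem_singleton,
        ← hcover, mem_erase]
      by_cases hv : v = x <;> simp [hv, mem_coe.1 hx]
    · rw [Fin.cons_zero, coe_singleton]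
      simp

structure IsConnectedPartition {ι : Type*} (G : SimpleGraph V) (C : ι → Finset V) : Prop where
  disjoint : Pairwise (Disjoint on C)
  exists_mem : ∀ v, ∃ i, v ∈ C i
  connected : ∀ i, (G.induce (C i : Set V)).Connected

namespace IsConnectedPartition

variable {ι : Type*} {C : ι → Finset V}

lemma nonempty (hC : IsConnectedPartition G C) (i : ι) : (C i).Nonempty :=
  coe_nonempty.1 (Set.nonempty_coe_sort.1 (hC.connected i).nonempty)

lemma update_update [DecidableEq V] [DecidableEq ι] (hC : IsConnectedPartition G C) {i j : ι}
    (hij : i ≠ j) {X Y : Finset V} (hXY : Disjoint X Y) (hunion : X ∪ Y = C i ∪ C j)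
    (hX : (G.induce (X : Set V)).Connected) (hY : (G.induce (Y : Set V)).Connected) :
    IsConnectedPartition G (update (update C i X) j Y) := by
  have hother : ∀ m, m ≠ i → m ≠ j → Disjoint (X ∪ Y) (C m) := fun m hmi hmj => by
    rw [hunion]
    exact disjoint_union_left.2 ⟨hC.disjoint hmi.symm, hC.disjoint hmj.symm⟩
  refine ⟨fun l m hlm => ?_, fun v => ?_, fun l => ?_⟩
  · simp only [onFun, update_apply]
    split_ifs <;> subst_vars
    all_goals first
      | exact absurd rfl hlm | exact absurd rfl hij | exact hXY | exact hXY.symm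
      | exact hC.disjoint hlm
      | exact (hother _ ‹_› ‹_›).mono_left subset_union_left
      | exact (hother _ ‹_› ‹_›).mono_left subset_union_right
      | exact ((hother _ ‹_› ‹_›).mono_left subset_union_left).symm
      | exact ((hother _ ‹_› ‹_›).mono_left subset_union_right).symm
  · obtain ⟨l, hl⟩ := hC.exists_mem v
    by_cases hlij : l = i ∨ l = j
    · have hv : v ∈ X ∪ Y := hunion ▸ by rcases hlij with rfl | rfl <;> simp [hl]
      rcases mem_union.1 hv with hv | hv
      · exact ⟨i, by rwa [update_of_ne hij, update_self]⟩
      · exact ⟨j, by rwa [update_self]⟩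
    · rw [not_or] at hlij
      exact ⟨l, by rwa [update_of_ne hlij.2, update_of_ne hlij.1]⟩
  · rcases eq_or_ne l j with rfl | hlj
    · rwa [update_self]
    rcases eq_or_ne l i with rfl | hli
    · rwa [update_of_ne hij, update_self]
    · rw [update_of_ne hlj, update_of_ne hli]
      exact hC.connected l

end IsConnectedPartition

def sumSqCard {ι : Type*} [Fintype ι] (C : ι → Finset V) : ℕ := ∑ i, (C i).card ^ 2

lemma sumSqCard_update_add {ι : Type*} [Fintype ι] [DecidableEq ι] (C : ι → Finset V) (i : ι)
    (X : Finset V) : sumSqCard (update C i X) + (C i).card ^ 2 = sumSqCard C + X.card ^ 2 := by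
  have hrest : ∑ l ∈ univ.erase i, (update C i X l).card ^ 2 =
      ∑ l ∈ univ.erase i, (C l).card ^ 2 :=
    sum_congr rfl fun l hl => by rw [update_of_ne (ne_of_mem_erase hl)]
  unfold sumSqCard
  rw [← add_sum_erase _ _ (mem_univ i), ← add_sum_erase _ _ (mem_univ i),
    hrest, update_self]
  ring

lemma add_sq_add_sq_lt {t b p : ℕ} (ht : 0 < t) (hbp : b < p) :
    (t + b) ^ 2 + p ^ 2 < (t + p) ^ 2 + b ^ 2 := by
  nlinarith

lemma IsConnectedPartition.exists_sumSqCard_lt [DecidableEq V] [DecidableRel G.Adj] {ι : Type*}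
    [Fintype ι] [DecidableEq ι] {C : ι → Finset V} (hG : G.IsAcyclic)
    (hC : IsConnectedPartition G C) {i j : ι} (hij : i ≠ j) {u : V} (hu : u ∈ C i)
    (hfail : (nbrsIn G (C i) u).card * (C j).card < (nbrsIn G (C j) u).card * ((C i).card - 1)) :
    ∃ C' : ι → Finset V, IsConnectedPartition G C' ∧ sumSqCard C' < sumSqCard C := by
  have hnbr_le : (nbrsIn G (C j) u).card ≤ 1 := hG.card_nbrsIn_le_one
    (hC.connected j).preconnected (Finset.disjoint_left.1 (hC.disjoint hij) hu)
  obtain ⟨v, hv⟩ : (nbrsIn G (C j) u).Nonempty := by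
    rw [← card_pos]
    by_contra! h
    simp_all
  obtain ⟨w, hw, hbig⟩ := exists_lt_card_componentIn (hC.connected i).preconnected hu
    (b := (C j).card) (by nlinarith)
  set K := G.componentIn ((C i).erase u) w
  have hKi : K ⊆ C i := componentIn_subset.trans (erase_subset u (C i))
  have huK : u ∈ C i \ K :=
    mem_sdiff.2 ⟨hu, fun h => notMem_erase u (C i) (componentIn_subset h)⟩
  have hdisj : Disjoint (C i \ K) (C j) := (hC.disjoint hij).mono_left sdiff_subset
  refine ⟨_, hC.update_update hij (X := C i \ K ∪ C j) (Y := K) ?_ ?_ ?_ ?_, ?_⟩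
  · exact disjoint_union_left.2
      ⟨sdiff_disjoint, (hC.disjoint hij).symm.mono_right hKi⟩
  · rw [union_right_comm, sdiff_union_of_subset hKi]
  · rw [coe_union]
    exact connected_induce_union
      (connected_induce_sdiff_componentIn (hC.connected i).preconnected hu w).preconnected
      (hC.connected j).preconnected huK (mem_filter.1 hv).1 (mem_filter.1 hv).2
  · have hw' := mem_filter.1 hw
    exact connected_induce_componentIn (mem_erase.2 ⟨(G.ne_of_adj hw'.2).symm, hw'.1⟩)
  · have h1 := sumSqCard_update_add (update C i (C i \ K ∪ C j)) j K
    have h2 := sumSqCard_update_add C i (C i \ K ∪ C j)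
    have hlt := add_sq_add_sq_lt (card_pos.2 ⟨u, huK⟩) hbig
    rw [update_of_ne hij.symm] at h1
    rw [card_union_of_disjoint hdisj] at h2
    rw [card_sdiff_add_card_eq_card hKi] at hlt
    linarith

end SimpleGraph

/-- Every tree with at least `k` vertices admits a connected generalized `k`-community
structure. -/
theorem stmt_13 {V : Type*} [Fintype V] [DecidableEq V] (G : SimpleGraph V)
    [DecidableRel G.Adj] (htree : G.IsTree) {k : ℕ} (hk : 2 ≤ k)
    (hcard : k ≤ Fintype.card V) :
    ∃ C : Fin k → Finset V, IsGenKComm G C ∧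
      ∀ i, (G.induce (↑(C i) : Set V)).Connected := by
  obtain ⟨k, rfl⟩ : ∃ k', k = k' + 1 := ⟨k - 1, by omega⟩
  have huniv : (G.induce (univ : Finset V)).Connected := by
    rw [coe_univ]
    exact (G.induceUnivIso).connected_iff.2 htree.connected
  obtain ⟨C₀, hdisj, hcover, hconn⟩ := huniv.exists_connected_fin_partition k hcard
  obtain ⟨C, hC, hmin⟩ := (measure SimpleGraph.sumSqCard).wf.has_min
    {C : Fin (k + 1) → Finset V | G.IsConnectedPartition C}
    ⟨C₀, hdisj, fun v => (hcover v).1 (mem_univ v), hconn⟩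
  refine ⟨C, ⟨hC.nonempty, fun i j hij => hC.disjoint hij, hC.exists_mem,
    fun i j hij u hu => ?_⟩, hC.connected⟩
  by_contra! hfail
  obtain ⟨C', hC', hlt⟩ := hC.exists_sumSqCard_lt htree.isAcyclic hij hu hfail
  exact hmin C' hC' hlt
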